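/- Let M denote the dyadic maximal operator on ℝ, M f(x) = sup { |I|^{-1} ∫_I f : I a dyadic interval with x ∈ I }. Let g = 1_{[0,3)} + 1_{[5,8)} and h = 1_{[2,3)} + 1_{[5,6)}. Then var_ℝ (M g) = 5/2, var_ℝ (M h) = 3, and var_ℝ (M(g+h)) = 6; in particular var_ℝ (M(g+h)) > var_ℝ (M g) + var_ℝ (M h), so the functional f ↦ var_ℝ (M f) is not subadditive. -/

import Mathlib

/-!
For `f ≥ 0` supported in `[0, 2 ^ K)` and constant on unit intervals, the dyadic maximal function
`M f` is a step function: on `[i, i + 1) ⊆ [0, 2 ^ K)` it is the largest average of `f` over the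
dyadic intervals of lengths `1, 2, …, 2 ^ K` containing `i`, on `[2 ^ k, 2 ^ (k + 1))` with
`k ≥ K` it is `(∫ f) / 2 ^ (k + 1)`, and it vanishes on `(-∞, 0)`. Testing a step function against
`φ'` turns a jump of size `a` at `q` into `-a φ(q)`, so its variation is at most the sum of the
jump sizes, and disjoint bumps with `φ(q) = -sign a` show that this bound is attained. For `g`, `h`
and `g + h` this leaves a finite computation.
-/

open MeasureTheory Metric Set Filter
open scoped ENNReal Topology

noncomputable section

/-- A dyadic interval `[2^n m, 2^n (m+1))` in `ℝ`. -/
def IsDyadicInterval (I : Set ℝ) : Prop :=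
  ∃ n m : ℤ, I = Set.Ico ((2:ℝ)^n * m) ((2:ℝ)^n * (m + 1))

/-- The dyadic maximal operator on `ℝ`:
`M f(x) = sup { |I|⁻¹ ∫_I f : I dyadic interval, x ∈ I }`. -/
def dyadicMax1 (f : ℝ → ℝ) (x : ℝ) : ℝ :=
  sSup {y : ℝ | ∃ I : Set ℝ, IsDyadicInterval I ∧ x ∈ I ∧ y = ⨍ z in I, f z}

/-- The variation of `f` in an open set `U ⊆ ℝ`:
`var_U f = sup { ∫_U f · φ' : φ ∈ C¹_c(U), |φ| ≤ 1 }`. -/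
def var1 (U : Set ℝ) (f : ℝ → ℝ) : ℝ≥0∞ :=
  ⨆ φ ∈ {φ : ℝ → ℝ | ContDiff ℝ 1 φ ∧ HasCompactSupport φ ∧ tsupport φ ⊆ U ∧
      ∀ x, |φ x| ≤ 1},
    ENNReal.ofReal (∫ x in U, f x * deriv φ x)

def dyadicCell (n : ℤ) (x : ℝ) : Set ℝ :=
  Ico ((2:ℝ) ^ n * ⌊x / 2 ^ n⌋) (2 ^ n * (⌊x / 2 ^ n⌋ + 1))

lemma mem_Ico_zpow_mul_iff {n m : ℤ} {x : ℝ} :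
    x ∈ Ico ((2:ℝ) ^ n * m) (2 ^ n * (m + 1)) ↔ ⌊x / 2 ^ n⌋ = m := by
  have h2n : (0:ℝ) < 2 ^ n := by positivity
  rw [Int.floor_eq_iff, mem_Ico, le_div_iff₀ h2n, div_lt_iff₀ h2n, mul_comm (m:ℝ),
    mul_comm _ (2 ^ n)]

lemma mem_dyadicCell_iff {n : ℤ} {x z : ℝ} : z ∈ dyadicCell n x ↔ ⌊z / 2 ^ n⌋ = ⌊x / 2 ^ n⌋ :=
  mem_Ico_zpow_mul_iff

lemma mem_dyadicCell_self (n : ℤ) (x : ℝ) : x ∈ dyadicCell n x :=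
  mem_dyadicCell_iff.2 rfl

lemma dyadicCell_eq_Ico {n m : ℤ} {x : ℝ} (hx : x ∈ Ico ((2:ℝ) ^ n * m) (2 ^ n * (m + 1))) :
    dyadicCell n x = Ico ((2:ℝ) ^ n * m) (2 ^ n * (m + 1)) := by
  rw [dyadicCell, mem_Ico_zpow_mul_iff.1 hx]

lemma isDyadicInterval_dyadicCell (n : ℤ) (x : ℝ) : IsDyadicInterval (dyadicCell n x) :=
  ⟨n, _, rfl⟩

lemma dyadicCell_mono {n k : ℤ} (h : n ≤ k) (x : ℝ) : dyadicCell n x ⊆ dyadicCell k x := by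
  obtain ⟨d, hd⟩ := Int.eq_ofNat_of_zero_le (sub_nonneg.2 h)
  have hk : (2:ℝ) ^ k = 2 ^ n * ((2 ^ d : ℕ) : ℝ) := by
    rw [show k = n + d by omega, zpow_add₀ two_ne_zero, zpow_natCast]; push_cast; ring
  intro z hz
  rw [mem_dyadicCell_iff] at hz ⊢
  rw [hk, ← div_div, ← div_div, Int.floor_div_natCast, Int.floor_div_natCast, hz]

lemma volume_dyadicCell (n : ℤ) (x : ℝ) : volume (dyadicCell n x) = ENNReal.ofReal (2 ^ n) := by
  rw [dyadicCell, Real.volume_Ico]; ring_nf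

lemma dyadicMax1_eq_iSup (f : ℝ → ℝ) (x : ℝ) :
    dyadicMax1 f x = ⨆ n : ℤ, ⨍ z in dyadicCell n x, f z := by
  rw [dyadicMax1, iSup]
  congr 1
  ext y
  constructor
  · rintro ⟨I, ⟨n, m, rfl⟩, hx, rfl⟩
    exact ⟨n, by simp only [dyadicCell_eq_Ico hx]⟩
  · rintro ⟨n, rfl⟩
    exact ⟨_, isDyadicInterval_dyadicCell n x, mem_dyadicCell_self n x, rfl⟩

lemma dyadicMax1_eq_of_forall_le {f : ℝ → ℝ} {x v : ℝ} {n₀ : ℤ}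
    (h₀ : ⨍ z in dyadicCell n₀ x, f z = v) (hle : ∀ n, ⨍ z in dyadicCell n x, f z ≤ v) :
    dyadicMax1 f x = v := by
  rw [dyadicMax1_eq_iSup]
  exact le_antisymm (ciSup_le hle) (h₀ ▸ le_ciSup ⟨v, by rintro _ ⟨n, rfl⟩; exact hle n⟩ n₀)

lemma setAverage_dyadicCell_eq_of_eqOn {f : ℝ → ℝ} {c : ℝ} {n : ℤ} {x : ℝ}
    (h : EqOn f (fun _ => c) (dyadicCell n x)) : ⨍ z in dyadicCell n x, f z = c := by
  rw [setAverage_congr_fun (s := dyadicCell n x) measurableSet_Ico (Eventually.of_forall h),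
    setAverage_const]
  · simp [volume_dyadicCell, zpow_pos]
  · simp [volume_dyadicCell]

lemma dyadicCell_eq_Ico_zero {n : ℤ} {x : ℝ} (hx₀ : 0 ≤ x) (hx : x < 2 ^ n) :
    dyadicCell n x = Ico 0 (2 ^ n) := by
  simpa using dyadicCell_eq_Ico (n := n) (m := 0) (x := x) (by simpa using ⟨hx₀, hx⟩)

lemma dyadicCell_natCast_eq {i : ℕ} {x : ℝ} (hx : x ∈ Ico (i : ℝ) (i + 1)) (n : ℕ) :
    dyadicCell n x = Ico ((2 ^ n * (i / 2 ^ n) : ℕ) : ℝ) ((2 ^ n * (i / 2 ^ n) : ℕ) + 2 ^ n) := by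
  have hfloor : ⌊x⌋ = i := Int.floor_eq_iff.2 (by exact_mod_cast hx)
  have h : ⌊x / 2 ^ (n : ℤ)⌋ = ((i / 2 ^ n : ℕ) : ℤ) := by
    rw [zpow_natCast, ← Nat.cast_ofNat, ← Nat.cast_pow, Int.floor_div_natCast, hfloor]; norm_cast
  rw [dyadicCell, h, Int.cast_natCast, zpow_natCast]; push_cast; ring_nf

lemma setAverage_Ico_zero_eq_integral_div {f : ℝ → ℝ} {a : ℝ} (ha : 0 < a)
    (hsupp : Function.support f ⊆ Ico 0 a) : ⨍ z in Ico 0 a, f z = (∫ z, f z) / a := by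
  rw [setAverage_eq, measureReal_def, Real.volume_Ico, sub_zero, ENNReal.toReal_ofReal ha.le,
    setIntegral_eq_integral_of_forall_compl_eq_zero fun z hz => Function.notMem_support.1
      (fun h => hz (hsupp h)), smul_eq_mul, inv_mul_eq_div]

section DyadicMax

variable {f : ℝ → ℝ}

lemma dyadicMax1_eq_zero_of_neg (hf : ∀ z < 0, f z = 0) {x : ℝ} (hx : x < 0) :
    dyadicMax1 f x = 0 := by
  have hcell : ∀ n : ℤ, ⨍ z in dyadicCell n x, f z = 0 := fun n =>
    setAverage_dyadicCell_eq_of_eqOn fun z hz => hf z <| by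
      have hm : ⌊x / 2 ^ n⌋ + 1 ≤ 0 :=
        Int.floor_lt.2 (by push_cast; exact div_neg_of_neg_of_pos hx (by positivity))
      have : (2:ℝ) ^ n * (⌊x / 2 ^ n⌋ + 1) ≤ 0 :=
        mul_nonpos_of_nonneg_of_nonpos (by positivity) (by exact_mod_cast hm)
      exact hz.2.trans_le this
  exact dyadicMax1_eq_of_forall_le (hcell 0) fun n => (hcell n).le

variable (hf : 0 ≤ f) {K : ℕ} (hsupp : Function.support f ⊆ Ico 0 (2 ^ K))
include hf hsupp

/-- Beyond the support, the best dyadic interval is the smallest one reaching back to `0`. -/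
lemma dyadicMax1_eq_integral_div_of_mem_Ico {k : ℕ} (hk : K ≤ k) {x : ℝ}
    (hx : x ∈ Ico ((2:ℝ) ^ k) (2 ^ (k + 1))) : dyadicMax1 f x = (∫ z, f z) / 2 ^ (k + 1) := by
  have hS : 0 ≤ ∫ z, f z := integral_nonneg hf
  have hx₀ : 0 ≤ x := (pow_nonneg zero_le_two k).trans hx.1
  have hlarge : ∀ n : ℤ, k + 1 ≤ n → ⨍ z in dyadicCell n x, f z = (∫ z, f z) / 2 ^ n := by
    intro n hn
    have h2n : (2:ℝ) ^ (k + 1) ≤ 2 ^ n := by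
      rw [← zpow_natCast]; exact zpow_le_zpow_right₀ one_le_two (by push_cast; exact hn)
    rw [dyadicCell_eq_Ico_zero hx₀ (hx.2.trans_le h2n),
      setAverage_Ico_zero_eq_integral_div (by positivity) (hsupp.trans (Ico_subset_Ico_right
        ((pow_le_pow_right₀ one_le_two (by omega : K ≤ k + 1)).trans h2n)))]
  refine dyadicMax1_eq_of_forall_le (n₀ := k + 1) (by rw [hlarge _ le_rfl]; norm_cast) fun n => ?_
  rcases le_or_gt n k with hn | hn
  · have hcell : dyadicCell k x = Ico ((2:ℝ) ^ k) (2 ^ (k + 1)) := by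
      have h := dyadicCell_eq_Ico (n := k) (m := 1) (x := x)
        (by norm_num [pow_succ] at hx ⊢; exact hx)
      norm_num [pow_succ] at h ⊢; exact h
    rw [setAverage_dyadicCell_eq_of_eqOn fun z hz => Function.notMem_support.1 fun hfz =>
      (hsupp hfz).2.not_ge (((pow_le_pow_right₀ one_le_two hk).trans
        (hcell ▸ dyadicCell_mono hn x hz).1))]
    positivity
  · rw [hlarge n hn]
    gcongr
    rw [← zpow_natCast]; exact zpow_le_zpow_right₀ one_le_two (by push_cast; omega)

/-- On the support, intervals shorter than `1` see the constant value `f ⌊x⌋` and intervals longer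
than `2 ^ K` see the total mass spread thinner, so only the scales `1, 2, …, 2 ^ K` compete. -/
lemma dyadicMax1_eq_sup'_of_eq_floor (hfloor : ∀ z, f z = f ⌊z⌋) {x : ℝ}
    (hx : x ∈ Ico 0 ((2:ℝ) ^ K)) :
    dyadicMax1 f x = (Finset.range (K + 1)).sup' Finset.nonempty_range_add_one
      fun n => ⨍ z in dyadicCell n x, f z := by
  have hsmall : ∀ n : ℤ, n ≤ 0 → ⨍ z in dyadicCell n x, f z = f ⌊x⌋ := fun n hn =>
    setAverage_dyadicCell_eq_of_eqOn fun z hz => by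
      have hz : ⌊z / 2 ^ (0:ℤ)⌋ = ⌊x / 2 ^ (0:ℤ)⌋ := mem_dyadicCell_iff.1 (dyadicCell_mono hn x hz)
      simp only [zpow_zero, div_one] at hz
      rw [hfloor z, hz]
  have hlarge : ∀ n : ℤ, K ≤ n → ⨍ z in dyadicCell n x, f z = (∫ z, f z) / 2 ^ n := by
    intro n hn
    have h2n : (2:ℝ) ^ K ≤ 2 ^ n := by
      rw [← zpow_natCast]; exact zpow_le_zpow_right₀ one_le_two hn
    rw [dyadicCell_eq_Ico_zero hx.1 (hx.2.trans_le h2n),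
      setAverage_Ico_zero_eq_integral_div (by positivity) (hsupp.trans (Ico_subset_Ico_right h2n))]
  obtain ⟨n₀, -, hn₀⟩ := Finset.exists_mem_eq_sup' Finset.nonempty_range_add_one
    fun n : ℕ => ⨍ z in dyadicCell n x, f z
  refine dyadicMax1_eq_of_forall_le hn₀.symm fun n => ?_
  have hle : ∀ m : ℕ, m ≤ K → ⨍ z in dyadicCell m x, f z ≤ (Finset.range (K + 1)).sup'
      Finset.nonempty_range_add_one fun n => ⨍ z in dyadicCell n x, f z := fun m hm =>
    Finset.le_sup' (fun n : ℕ => ⨍ z in dyadicCell n x, f z) (Finset.mem_range_succ_iff.2 hm)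
  rcases le_or_gt n 0 with hn | hn
  · rw [hsmall n hn, ← hsmall 0 le_rfl]; exact_mod_cast hle 0 K.zero_le
  rcases le_or_gt n K with hnK | hnK
  · lift n to ℕ using hn.le
    exact hle n (by exact_mod_cast hnK)
  · refine le_trans ?_ (hle K le_rfl)
    rw [hlarge n hnK.le, hlarge K le_rfl]
    gcongr
    · exact integral_nonneg hf
    · norm_num

end DyadicMax

section TestFunctions

variable {φ : ℝ → ℝ}

lemma integral_Ioi_deriv_eq_neg (hφ : ContDiff ℝ 1 φ) (hφc : HasCompactSupport φ) (q : ℝ) :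
    ∫ x in Ioi q, deriv φ x = -φ q := by
  have h := integral_Ioi_of_hasDerivAt_of_tendsto' (f := φ) (a := q) (m := 0)
    (fun x _ => (hφ.differentiable one_ne_zero x).hasDerivAt)
    ((hφ.continuous_deriv le_rfl).integrable_of_hasCompactSupport hφc.deriv).integrableOn
    (hφc.is_zero_at_infty.mono_left atTop_le_cocompact)
  rwa [zero_sub] at h

lemma integral_sum_indicator_Ici_mul_deriv (hφ : ContDiff ℝ 1 φ) (hφc : HasCompactSupport φ)
    {ι : Type*} (s : Finset ι) (q a : ι → ℝ) :
    ∫ x, (∑ i ∈ s, (Ici (q i)).indicator (fun _ => a i) x) * deriv φ x =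
      -∑ i ∈ s, a i * φ (q i) := by
  have hφ' : Integrable (deriv φ) :=
    (hφ.continuous_deriv le_rfl).integrable_of_hasCompactSupport hφc.deriv
  have hterm : ∀ i, (fun x => (Ici (q i)).indicator (fun _ => a i) x * deriv φ x) =
      (Ici (q i)).indicator fun x => a i * deriv φ x := fun i => by
    ext x; rw [indicator_mul_left]
  simp_rw [Finset.sum_mul]
  rw [integral_finsetSum s fun i _ => hterm i ▸ (hφ'.const_mul (a i)).indicator measurableSet_Ici]
  simp only [hterm, integral_indicator measurableSet_Ici, integral_Ici_eq_integral_Ioi,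
    integral_const_mul, integral_Ioi_deriv_eq_neg hφ hφc, mul_neg, Finset.sum_neg_distrib]

lemma integral_mul_deriv_congr {f g : ℝ → ℝ} {c : ℝ} (hφ : tsupport φ ⊆ Iio c)
    (hfg : ∀ x < c, f x = g x) : ∫ x, f x * deriv φ x = ∫ x, g x * deriv φ x := by
  congr 1
  ext x
  rcases lt_or_ge x c with hx | hx
  · rw [hfg x hx]
  · have : deriv φ x = 0 := Function.notMem_support.1 fun h =>
      (hφ (support_deriv_subset h)).not_ge hx
    simp [this]

end TestFunctions

section Jumps

variable {q : ℕ → ℝ}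

lemma StrictMono.exists_pos_two_mul_le_sub (hq : StrictMono q) (n : ℕ) :
    ∃ r > 0, ∀ i j, i < j → j ≤ n → 2 * r ≤ q j - q i := by
  induction n with
  | zero => exact ⟨1, one_pos, fun i j hij hj => by omega⟩
  | succ n ih =>
    obtain ⟨r, hr, hgap⟩ := ih
    have hstep : 0 < q (n + 1) - q n := sub_pos.2 (hq n.lt_succ_self)
    refine ⟨min r ((q (n + 1) - q n) / 2), by positivity, fun i j hij hj => ?_⟩
    rcases (Nat.le_succ_iff.1 hj) with hj | rfl
    · exact (mul_le_mul_of_nonneg_left (min_le_left _ _) zero_le_two).trans (hgap i j hij hj)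
    · have : 2 * min r ((q (n + 1) - q n) / 2) ≤ q (n + 1) - q n := by
        linarith [min_le_right r ((q (n + 1) - q n) / 2)]
      exact this.trans (by linarith [hq.monotone (Nat.le_of_lt_succ hij)])

lemma ContDiffBump.abs_lt_rOut_of_ne_zero (β : ContDiffBump (0:ℝ)) {y : ℝ} (hy : β y ≠ 0) :
    |y| < β.rOut := by
  simpa [β.support_eq, Real.dist_eq] using Function.mem_support.2 hy

lemma ContDiffBump.sum_mul_eq_single {ι : Type*} (β : ContDiffBump (0:ℝ)) {s : Finset ι}
    {q : ι → ℝ} (hsep : ∀ i ∈ s, ∀ j ∈ s, i ≠ j → 2 * β.rOut ≤ |q i - q j|) (c : ι → ℝ)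
    {x : ℝ} {i : ι} (hi : i ∈ s) (hxi : β (x - q i) ≠ 0) :
    ∑ j ∈ s, c j * β (x - q j) = c i * β (x - q i) := by
  refine Finset.sum_eq_single i (fun j hj hji => ?_) (absurd hi)
  by_contra hxj
  have := hsep j hj i hi hji
  have := abs_sub_le (q j) x (q i)
  rw [abs_sub_comm (q j) x] at this
  linarith [β.abs_lt_rOut_of_ne_zero hxi, β.abs_lt_rOut_of_ne_zero (right_ne_zero_of_mul hxj)]

/-- A sum of bumps `c i • β (x - q i)` of a radius so small that they have disjoint supports. -/
lemma StrictMono.exists_contDiff_interpolating (hq : StrictMono q) (n : ℕ) (c : ℕ → ℝ)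
    (hc : ∀ i, |c i| ≤ 1) :
    ∃ φ : ℝ → ℝ, ContDiff ℝ 1 φ ∧ HasCompactSupport φ ∧ tsupport φ ⊆ Iio (q n) ∧
      (∀ x, |φ x| ≤ 1) ∧ ∀ i < n, φ (q i) = c i := by
  obtain ⟨r, hr, hgap⟩ := hq.exists_pos_two_mul_le_sub n
  let β : ContDiffBump (0:ℝ) := ⟨r / 2, r, by positivity, by linarith⟩
  have hsep : ∀ i ∈ Finset.range n, ∀ j ∈ Finset.range n, i ≠ j → 2 * β.rOut ≤ |q i - q j| := by
    intro i hi j hj hij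
    rcases lt_or_gt_of_ne hij with h | h
    · rw [abs_sub_comm]; exact (hgap i j h (Finset.mem_range.1 hj).le).trans (le_abs_self _)
    · exact (hgap j i h (Finset.mem_range.1 hi).le).trans (le_abs_self _)
  have hβ₀ : β 0 = 1 := β.one_of_mem_closedBall (by simp; positivity)
  let φ : ℝ → ℝ := fun x => ∑ i ∈ Finset.range n, c i * β (x - q i)
  have hsupp : Function.support φ ⊆ Icc (q 0 - r) (q n - r) := fun x hx => by
    obtain ⟨i, hi, hxi⟩ := Finset.exists_ne_zero_of_sum_ne_zero hx
    have := abs_lt.1 (β.abs_lt_rOut_of_ne_zero (right_ne_zero_of_mul hxi))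
    have := hgap i n (Finset.mem_range.1 hi) le_rfl
    have := hq.monotone i.zero_le
    constructor <;> linarith
  have htsupp : tsupport φ ⊆ Icc (q 0 - r) (q n - r) := closure_minimal hsupp isClosed_Icc
  refine ⟨φ, ContDiff.sum fun i _ => contDiff_const.mul
      (β.contDiff.comp (contDiff_id.sub contDiff_const)),
    isCompact_Icc.of_isClosed_subset (isClosed_tsupport φ) htsupp,
    fun x hx => (htsupp hx).2.trans_lt (by linarith), fun x => ?_, fun k hk => ?_⟩
  · by_cases hx : φ x = 0
    · simp [hx]
    obtain ⟨i, hi, hxi⟩ := Finset.exists_ne_zero_of_sum_ne_zero hx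
    replace hxi := right_ne_zero_of_mul hxi
    rw [show φ x = _ from β.sum_mul_eq_single hsep c hi hxi, abs_mul,
      abs_of_nonneg (β.nonneg' _)]
    exact mul_le_one₀ (hc i) (β.nonneg' _) β.le_one
  · rw [show φ (q k) = _ from β.sum_mul_eq_single hsep c (Finset.mem_range.2 hk)
      (by rw [sub_self, hβ₀]; exact one_ne_zero), sub_self, hβ₀, mul_one]

variable {f : ℝ → ℝ} {a : ℕ → ℝ}

lemma eq_sum_indicator_Ici_of_eq_partialSum (hq : StrictMono q) (hq_top : Tendsto q atTop atTop)
    (hf₀ : ∀ x < q 0, f x = 0)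
    (hf : ∀ i, ∀ x ∈ Ico (q i) (q (i + 1)), f x = ∑ j ∈ Finset.range (i + 1), a j)
    {n : ℕ} {x : ℝ} (hx : x < q n) :
    f x = ∑ j ∈ Finset.range n, (Ici (q j)).indicator (fun _ => a j) x := by
  rcases lt_or_ge x (q 0) with hx₀ | hx₀
  · refine (hf₀ x hx₀).trans (Finset.sum_eq_zero fun j _ => ?_).symm
    exact indicator_of_notMem (fun h => (hq.monotone (Nat.zero_le j)).not_gt (hx₀.trans_le' h)) _
  have hex : ∃ m, x < q m := (hq_top.eventually_gt_atTop x).exists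
  have hm₀ : Nat.find hex ≠ 0 := fun h => (h ▸ Nat.find_spec hex).not_ge hx₀
  obtain ⟨i, hi⟩ := Nat.exists_eq_succ_of_ne_zero hm₀
  have hxi : x ∈ Ico (q i) (q (i + 1)) :=
    ⟨not_lt.1 (Nat.find_min hex (by omega)),
      by rw [← Nat.succ_eq_add_one, ← hi]; exact Nat.find_spec hex⟩
  have hin : i + 1 ≤ n := by rw [← Nat.succ_eq_add_one, ← hi]; exact Nat.find_min' hex hx
  rw [hf i x hxi, ← Finset.sum_subset (Finset.range_subset_range.2 hin)]
  · refine Finset.sum_congr rfl fun j hj => ?_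
    have hj : x ∈ Ici (q j) := (hq.monotone (Nat.lt_succ_iff.1 (Finset.mem_range.1 hj))).trans hxi.1
    rw [indicator_of_mem hj]
  · intro j _ hj
    have hij : i + 1 ≤ j := not_lt.1 fun h => hj (Finset.mem_range.2 h)
    exact indicator_of_notMem (fun h => (hxi.2.trans_le (hq.monotone hij)).not_ge h) _

theorem var1_univ_eq_tsum_of_eq_partialSum (hq : StrictMono q) (hq_top : Tendsto q atTop atTop)
    (hf₀ : ∀ x < q 0, f x = 0)
    (hf : ∀ i, ∀ x ∈ Ico (q i) (q (i + 1)), f x = ∑ j ∈ Finset.range (i + 1), a j) :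
    var1 univ f = ∑' i, ENNReal.ofReal |a i| := by
  have hint : ∀ n φ, ContDiff ℝ 1 φ → HasCompactSupport φ → tsupport φ ⊆ Iio (q n) →
      ∫ x in univ, f x * deriv φ x = -∑ j ∈ Finset.range n, a j * φ (q j) :=
      fun n φ hφ hφc hφn => by
    rw [setIntegral_univ, integral_mul_deriv_congr hφn fun x hx =>
      eq_sum_indicator_Ici_of_eq_partialSum hq hq_top hf₀ hf hx,
      integral_sum_indicator_Ici_mul_deriv hφ hφc]
  apply le_antisymm
  · refine iSup₂_le ?_
    rintro φ ⟨hφ, hφc, -, hφ₁⟩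
    obtain ⟨R, hR⟩ := hφc.isCompact.bddAbove
    obtain ⟨n, hn⟩ := (hq_top.eventually_gt_atTop R).exists
    have hbound : -∑ j ∈ Finset.range n, a j * φ (q j) ≤ ∑ j ∈ Finset.range n, |a j| := by
      rw [← Finset.sum_neg_distrib]
      refine Finset.sum_le_sum fun j _ => (neg_le_abs _).trans ?_
      rw [abs_mul]
      exact mul_le_of_le_one_right (abs_nonneg _) (hφ₁ _)
    rw [hint n φ hφ hφc fun x hx => (hR hx).trans_lt hn]
    calc ENNReal.ofReal (-∑ j ∈ Finset.range n, a j * φ (q j))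
        ≤ ENNReal.ofReal (∑ j ∈ Finset.range n, |a j|) := ENNReal.ofReal_le_ofReal hbound
      _ = ∑ j ∈ Finset.range n, ENNReal.ofReal |a j| :=
        ENNReal.ofReal_sum_of_nonneg fun _ _ => abs_nonneg _
      _ ≤ ∑' j, ENNReal.ofReal |a j| := ENNReal.sum_le_tsum _
  · rw [ENNReal.tsum_eq_iSup_nat]
    refine iSup_le fun n => ?_
    obtain ⟨φ, hφ, hφc, hφn, hφ₁, hφq⟩ := hq.exists_contDiff_interpolating n
      (fun j => -SignType.sign (a j)) fun j => by
        rcases lt_trichotomy (a j) 0 with h | h | h <;> simp [h]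
    have hval : -∑ j ∈ Finset.range n, a j * φ (q j) = ∑ j ∈ Finset.range n, |a j| := by
      rw [← Finset.sum_neg_distrib]
      refine Finset.sum_congr rfl fun j hj => ?_
      rw [hφq j (Finset.mem_range.1 hj), mul_neg, neg_neg, self_mul_sign]
    refine le_trans ?_ (le_iSup₂ (f := fun φ _ => ENNReal.ofReal (∫ x in univ, f x * deriv φ x))
      φ ⟨hφ, hφc, subset_univ _, hφ₁⟩)
    rw [hint n φ hφ hφc hφn, hval, ENNReal.ofReal_sum_of_nonneg fun _ _ => abs_nonneg _]

theorem var1_univ_eq_of_eqOn_Ico {v : ℕ → ℝ} (hq : StrictMono q) (hq_top : Tendsto q atTop atTop)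
    (hf₀ : ∀ x < q 0, f x = 0) (hf : ∀ i, ∀ x ∈ Ico (q i) (q (i + 1)), f x = v i) :
    var1 univ f = ENNReal.ofReal |v 0| + ∑' i, ENNReal.ofReal |v (i + 1) - v i| := by
  let a : ℕ → ℝ := fun i => match i with
    | 0 => v 0
    | i + 1 => v (i + 1) - v i
  have ha : ∀ i, ∑ j ∈ Finset.range (i + 1), a j = v i := fun i => by
    induction i with
    | zero => simp [a]
    | succ i ih => rw [Finset.sum_range_succ, ih]; simp [a]
  rw [var1_univ_eq_tsum_of_eq_partialSum (a := a) hq hq_top hf₀ fun i x hx => (hf i x hx).trans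
    (ha i).symm, tsum_eq_zero_add' ENNReal.summable]

end Jumps

structure IsUnitStep (K : ℕ) (f : ℝ → ℝ) : Prop where
  nonneg : 0 ≤ f
  support_subset : Function.support f ⊆ Ico 0 (2 ^ K)
  eq_floor : ∀ z, f z = f ⌊z⌋

namespace IsUnitStep

variable {K : ℕ} {f g : ℝ → ℝ}

lemma add (hf : IsUnitStep K f) (hg : IsUnitStep K g) : IsUnitStep K (f + g) where
  nonneg := add_nonneg hf.nonneg hg.nonneg
  support_subset :=
    (Function.support_add f g).trans (union_subset hf.support_subset hg.support_subset)
  eq_floor z := by simp only [Pi.add_apply, ← hf.eq_floor, ← hg.eq_floor]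

lemma indicator_Ico {c d : ℤ} (hc : 0 ≤ c) (hd : (d : ℝ) ≤ 2 ^ K) :
    IsUnitStep K ((Ico (c : ℝ) d).indicator 1) where
  nonneg := indicator_nonneg fun _ _ => zero_le_one
  support_subset := support_indicator_subset.trans
    (Ico_subset_Ico (by exact_mod_cast hc) hd)
  eq_floor z := by
    have hc : (c : ℝ) ≤ z ↔ (c : ℝ) ≤ ⌊z⌋ := by rw [Int.cast_le, Int.le_floor]
    have hd : z < d ↔ (⌊z⌋ : ℝ) < d := by rw [Int.cast_lt, Int.floor_lt]
    simp only [indicator_apply, mem_Ico, hc, hd, Pi.one_apply]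

lemma eq_of_mem_Ico (hf : IsUnitStep K f) {p : ℕ} {z : ℝ} (hz : z ∈ Ico (p : ℝ) (p + 1)) :
    f z = f p := by
  rw [hf.eq_floor, Int.floor_eq_iff.2 (by exact_mod_cast hz), Int.cast_natCast]

lemma integrableOn_Ico (hf : IsUnitStep K f) (a L : ℕ) : IntegrableOn f (Ico (a : ℝ) (a + L)) := by
  induction L with
  | zero => simp
  | succ L ih =>
    rw [Nat.cast_succ, ← add_assoc,
      ← Ico_union_Ico_eq_Ico (b := (a : ℝ) + L) (by linarith) (by linarith)]
    refine ih.union ((integrableOn_const measure_Ico_lt_top.ne (C := f (a + L : ℕ))).congr_fun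
      (fun z hz => ?_) measurableSet_Ico)
    exact (hf.eq_of_mem_Ico (p := a + L) (by exact_mod_cast hz)).symm

lemma setIntegral_Ico (hf : IsUnitStep K f) (a L : ℕ) :
    ∫ z in Ico (a : ℝ) (a + L), f z = ∑ p ∈ Finset.range L, f (a + p : ℕ) := by
  induction L with
  | zero => simp
  | succ L ih =>
    have hunit : ∫ z in Ico ((a + L : ℕ) : ℝ) ((a + L : ℕ) + 1), f z = f (a + L : ℕ) := by
      rw [setIntegral_congr_fun measurableSet_Ico fun z hz => hf.eq_of_mem_Ico hz]
      simp
    rw [Nat.cast_succ, ← add_assoc,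
      ← Ico_union_Ico_eq_Ico (b := (a : ℝ) + L) (by linarith) (by linarith),
      setIntegral_union Ico_disjoint_Ico_same measurableSet_Ico (hf.integrableOn_Ico a L)
        (by exact_mod_cast hf.integrableOn_Ico (a + L) 1), ih, Finset.sum_range_succ]
    push_cast at hunit ⊢
    rw [hunit]

lemma integral_eq_sum (hf : IsUnitStep K f) : ∫ z, f z = ∑ p ∈ Finset.range (2 ^ K), f p := by
  rw [← setIntegral_eq_integral_of_forall_compl_eq_zero fun z hz =>
    Function.notMem_support.1 fun h => hz (hf.support_subset h)]
  simpa using hf.setIntegral_Ico 0 (2 ^ K)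

lemma setAverage_Ico (hf : IsUnitStep K f) (a L : ℕ) :
    ⨍ z in Ico (a : ℝ) (a + L), f z = (∑ p ∈ Finset.range L, f (a + p : ℕ)) / L := by
  rw [setAverage_eq, hf.setIntegral_Ico, measureReal_def, Real.volume_Ico, add_sub_cancel_left,
    ENNReal.toReal_ofReal (Nat.cast_nonneg L), smul_eq_mul, inv_mul_eq_div]

end IsUnitStep

section DyadicProfile

/-- The breakpoints of `dyadicMax1 f` when `IsUnitStep K f`. -/
def dyadicBreakpoint (K i : ℕ) : ℝ := if i < 2 ^ K then i else 2 ^ (K + (i - 2 ^ K))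

/-- The value of `dyadicMax1 f` on `[dyadicBreakpoint K i, dyadicBreakpoint K (i + 1))`. -/
def dyadicProfile (f : ℝ → ℝ) (K i : ℕ) : ℝ :=
  if i < 2 ^ K then (Finset.range (K + 1)).sup' Finset.nonempty_range_add_one fun n =>
      (∑ p ∈ Finset.range (2 ^ n), f (2 ^ n * (i / 2 ^ n) + p : ℕ)) / 2 ^ n
  else (∑ p ∈ Finset.range (2 ^ K), f p) / 2 ^ (K + 1) / 2 ^ (i - 2 ^ K)

lemma dyadicBreakpoint_of_le {K i : ℕ} (h : i ≤ 2 ^ K) : dyadicBreakpoint K i = i := by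
  rcases h.lt_or_eq with h | rfl
  · simp [dyadicBreakpoint, h]
  · simp [dyadicBreakpoint]

lemma dyadicBreakpoint_add_pow (K j : ℕ) : dyadicBreakpoint K (j + 2 ^ K) = 2 ^ (K + j) := by
  simp [dyadicBreakpoint]

lemma strictMono_dyadicBreakpoint (K : ℕ) : StrictMono (dyadicBreakpoint K) := by
  refine strictMono_nat_of_lt_succ fun i => ?_
  rcases lt_or_ge i (2 ^ K) with h | h
  · rw [dyadicBreakpoint_of_le h.le, dyadicBreakpoint_of_le h]; push_cast; linarith
  · obtain ⟨j, rfl⟩ := Nat.exists_eq_add_of_le' h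
    rw [dyadicBreakpoint_add_pow, add_right_comm, dyadicBreakpoint_add_pow]
    exact pow_lt_pow_right₀ one_lt_two (by omega)

lemma tendsto_dyadicBreakpoint (K : ℕ) : Tendsto (dyadicBreakpoint K) atTop atTop := by
  refine (tendsto_add_atTop_iff_nat (2 ^ K)).1 ?_
  simp_rw [dyadicBreakpoint_add_pow, pow_add]
  exact (tendsto_pow_atTop_atTop_of_one_lt one_lt_two).const_mul_atTop (by positivity)

variable {f : ℝ → ℝ} {K : ℕ}

lemma IsUnitStep.dyadicMax1_eq_dyadicProfile (hf : IsUnitStep K f) {i : ℕ} {x : ℝ}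
    (hx : x ∈ Ico (dyadicBreakpoint K i) (dyadicBreakpoint K (i + 1))) :
    dyadicMax1 f x = dyadicProfile f K i := by
  rcases lt_or_ge i (2 ^ K) with hi | hi
  · rw [dyadicBreakpoint_of_le hi.le, dyadicBreakpoint_of_le hi] at hx
    push_cast at hx
    have hx' : x ∈ Ico 0 ((2:ℝ) ^ K) :=
      ⟨(Nat.cast_nonneg i).trans hx.1, hx.2.trans_le (by exact_mod_cast hi)⟩
    rw [dyadicMax1_eq_sup'_of_eq_floor hf.nonneg hf.support_subset hf.eq_floor hx', dyadicProfile,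
      if_pos hi]
    congr 1
    ext n
    have h := hf.setAverage_Ico (2 ^ n * (i / 2 ^ n)) (2 ^ n)
    simp only [Nat.cast_pow, Nat.cast_ofNat] at h
    rw [dyadicCell_natCast_eq hx, h]
  · obtain ⟨j, rfl⟩ := Nat.exists_eq_add_of_le' hi
    rw [dyadicBreakpoint_add_pow, add_right_comm, dyadicBreakpoint_add_pow, ← add_assoc] at hx
    rw [dyadicMax1_eq_integral_div_of_mem_Ico hf.nonneg hf.support_subset (Nat.le_add_right K j) hx,
      hf.integral_eq_sum, dyadicProfile, if_neg (by omega), Nat.add_sub_cancel, div_div, ← pow_add,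
      add_right_comm]

theorem IsUnitStep.var1_dyadicMax1_eq (hf : IsUnitStep K f) :
    var1 univ (dyadicMax1 f) = ENNReal.ofReal (|dyadicProfile f K 0| +
      ∑ i ∈ Finset.range (2 ^ K), |dyadicProfile f K (i + 1) - dyadicProfile f K i| +
      dyadicProfile f K (2 ^ K)) := by
  set v := dyadicProfile f K
  set S := ∑ p ∈ Finset.range (2 ^ K), f p
  have hS : 0 ≤ S := Finset.sum_nonneg fun p _ => hf.nonneg p
  have hv : v (2 ^ K) = S / 2 ^ (K + 1) := by simp [v, dyadicProfile, S]
  have htail : ∀ j, |v (j + 2 ^ K + 1) - v (j + 2 ^ K)| = S / 2 ^ (K + 1) / 2 / 2 ^ j := fun j => by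
    simp only [v, dyadicProfile, if_neg (by omega : ¬ j + 2 ^ K + 1 < 2 ^ K),
      if_neg (by omega : ¬ j + 2 ^ K < 2 ^ K), show j + 2 ^ K + 1 - 2 ^ K = j + 1 by omega,
      Nat.add_sub_cancel, pow_succ]
    rw [abs_of_nonpos (by
      have : 0 ≤ S / 2 ^ (K + 1) / 2 ^ j := by positivity
      field_simp; linarith)]
    field_simp; ring
  have hsum : Summable fun i => |v (i + 1) - v i| := by
    refine (summable_nat_add_iff (2 ^ K)).1 ?_
    simp_rw [htail]
    exact summable_geometric_two' _
  rw [var1_univ_eq_of_eqOn_Ico (strictMono_dyadicBreakpoint K) (tendsto_dyadicBreakpoint K)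
      (fun x hx => dyadicMax1_eq_zero_of_neg (fun z hz => Function.notMem_support.1
        fun h => (hf.support_subset h).1.not_gt hz) (by simpa [dyadicBreakpoint] using hx))
      fun i x hx => hf.dyadicMax1_eq_dyadicProfile hx,
    ← ENNReal.ofReal_tsum_of_nonneg (fun _ => abs_nonneg _) hsum,
    ← ENNReal.ofReal_add (abs_nonneg _) (tsum_nonneg fun _ => abs_nonneg _),
    ← hsum.sum_add_tsum_nat_add (2 ^ K)]
  simp_rw [htail, tsum_geometric_two', hv, ← add_assoc]
  rfl

end DyadicProfile

section Counterexample

def counterexampleG : ℝ → ℝ := (Ico (0:ℝ) 3).indicator 1 + (Ico (5:ℝ) 8).indicator 1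

def counterexampleH : ℝ → ℝ := (Ico (2:ℝ) 3).indicator 1 + (Ico (5:ℝ) 6).indicator 1

lemma indicator_Ico_natCast (c d p : ℕ) :
    (Ico (c : ℝ) d).indicator (1 : ℝ → ℝ) p = if c ≤ p ∧ p < d then 1 else 0 := by
  simp only [indicator_apply, mem_Ico, Nat.cast_le, Nat.cast_lt, Pi.one_apply]

lemma isUnitStep_counterexampleG : IsUnitStep 3 counterexampleG := by
  simpa [counterexampleG] using
    (IsUnitStep.indicator_Ico (c := 0) (d := 3) le_rfl (by norm_num)).add
    (IsUnitStep.indicator_Ico (c := 5) (d := 8) (by norm_num) (by norm_num))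

lemma isUnitStep_counterexampleH : IsUnitStep 3 counterexampleH := by
  simpa [counterexampleH] using
    (IsUnitStep.indicator_Ico (c := 2) (d := 3) (by norm_num) (by norm_num)).add
    (IsUnitStep.indicator_Ico (c := 5) (d := 6) (by norm_num) (by norm_num))

lemma counterexampleG_natCast (p : ℕ) :
    counterexampleG p = (if p < 3 then 1 else 0) + if 5 ≤ p ∧ p < 8 then 1 else 0 := by
  simpa [counterexampleG] using
    congr($(indicator_Ico_natCast 0 3 p) + $(indicator_Ico_natCast 5 8 p))

lemma counterexampleH_natCast (p : ℕ) :
    counterexampleH p = (if 2 ≤ p ∧ p < 3 then 1 else 0) + if 5 ≤ p ∧ p < 6 then 1 else 0 := by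
  simpa [counterexampleH] using
    congr($(indicator_Ico_natCast 2 3 p) + $(indicator_Ico_natCast 5 6 p))

lemma sup'_range_four {α : Type*} [LinearOrder α] (a : ℕ → α) :
    (Finset.range (3 + 1)).sup' Finset.nonempty_range_add_one a =
      max (a 0) (max (a 1) (max (a 2) (a 3))) := rfl

lemma ENNReal.ofReal_five_div_two : ENNReal.ofReal (5 / 2) = 5 / 2 := by
  rw [ENNReal.ofReal_div_of_pos two_pos]; norm_num

lemma var1_dyadicMax1_counterexampleG : var1 univ (dyadicMax1 counterexampleG) = 5 / 2 := by
  rw [isUnitStep_counterexampleG.var1_dyadicMax1_eq, ← ENNReal.ofReal_five_div_two]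
  congr 1
  simp only [dyadicProfile, sup'_range_four, counterexampleG_natCast]
  norm_num [Finset.sum_range_succ, abs_of_nonneg, abs_of_nonpos]

lemma var1_dyadicMax1_counterexampleH : var1 univ (dyadicMax1 counterexampleH) = 3 := by
  rw [isUnitStep_counterexampleH.var1_dyadicMax1_eq, ← ENNReal.ofReal_ofNat 3]
  congr 1
  simp only [dyadicProfile, sup'_range_four, counterexampleH_natCast]
  norm_num [Finset.sum_range_succ, abs_of_nonneg, abs_of_nonpos]

lemma var1_dyadicMax1_counterexampleG_add_H :
    var1 univ (dyadicMax1 (counterexampleG + counterexampleH)) = 6 := by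
  rw [(isUnitStep_counterexampleG.add isUnitStep_counterexampleH).var1_dyadicMax1_eq,
    ← ENNReal.ofReal_ofNat 6]
  congr 1
  simp only [dyadicProfile, sup'_range_four, Pi.add_apply, counterexampleG_natCast,
    counterexampleH_natCast]
  norm_num [Finset.sum_range_succ, abs_of_nonneg, abs_of_nonpos]

end Counterexample

/-- With `g = 1_{[0,3)} + 1_{[5,8)}` and `h = 1_{[2,3)} + 1_{[5,6)}` one has
`var (M g) = 5/2`, `var (M h) = 3` and `var (M (g+h)) = 6 > 5/2 + 3`; in particular
`f ↦ var (M f)` is not subadditive. -/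
theorem var_dyadicMax_not_subadditive :
    let g : ℝ → ℝ := (Set.Ico (0:ℝ) 3).indicator 1 + (Set.Ico (5:ℝ) 8).indicator 1
    let h : ℝ → ℝ := (Set.Ico (2:ℝ) 3).indicator 1 + (Set.Ico (5:ℝ) 6).indicator 1
    var1 Set.univ (dyadicMax1 g) = 5/2 ∧
    var1 Set.univ (dyadicMax1 h) = 3 ∧
    var1 Set.univ (dyadicMax1 (g + h)) = 6 ∧
    var1 Set.univ (dyadicMax1 g) + var1 Set.univ (dyadicMax1 h) <
      var1 Set.univ (dyadicMax1 (g + h)) ∧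
    ¬ (∀ f₁ f₂ : ℝ → ℝ, var1 Set.univ (dyadicMax1 (f₁ + f₂)) ≤
        var1 Set.univ (dyadicMax1 f₁) + var1 Set.univ (dyadicMax1 f₂)) := by
  intro g h
  have hlt : (5 / 2 : ℝ≥0∞) + 3 < 6 := by
    rw [← ENNReal.ofReal_five_div_two, ← ENNReal.ofReal_ofNat 3, ← ENNReal.ofReal_ofNat 6,
      ← ENNReal.ofReal_add (by norm_num) (by norm_num), ENNReal.ofReal_lt_ofReal_iff (by norm_num)]
    norm_num
  have hg : var1 univ (dyadicMax1 g) = 5 / 2 := var1_dyadicMax1_counterexampleG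
  have hh : var1 univ (dyadicMax1 h) = 3 := var1_dyadicMax1_counterexampleH
  have hgh : var1 univ (dyadicMax1 (g + h)) = 6 := var1_dyadicMax1_counterexampleG_add_H
  refine ⟨hg, hh, hgh, ?_, fun H => (H g h).not_gt ?_⟩ <;> rwa [hg, hh, hgh]

end
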